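/- Let T be a semi-standard Young tableau with entries in {1 < ... < n < n̄ < ... < 1̄} satisfying the row-entry restriction (entry count (i,j) = 0 unless i = j or i = k̄ with k < j) and having the cancellation property. Then the word w(T) (right-to-left, top-to-bottom reading) is dominant if and only if the word w'(T) (row-by-row right-to-left reading) is dominant. Here a word is dominant if every initial subword has weight lying in the dominant Weyl chamber of sp(2n), i.e., for each i, in every prefix the quantity #i − #(i+1) + #(i+1)-bar − #ī is ≥ 0 when accumulated appropriately (all partial weights μ_{w_1},...,μ_{w_k} are dominant). -/

import Mathlib

open scoped BigOperators

/-- The ordered alphabet `C_n = {1 < ⋯ < n < n̄ < ⋯ < 1̄}`.  `Sum.inl i` denotes the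
unbarred letter `i+1` and `Sum.inr i` the barred letter `(i+1)‾` (0-indexed). -/
abbrev Letter (n : ℕ) := Fin n ⊕ Fin n

/-- Position of a letter in the total order `1 < ⋯ < n < n̄ < ⋯ < 1̄`. -/
def Letter.idx {n : ℕ} : Letter n → ℕ
  | Sum.inl i => (i : ℕ)
  | Sum.inr i => 2 * n - 1 - (i : ℕ)

/-- A semi-standard Young tableau with entries in the alphabet `C_n`,
encoded by its row lengths (the shape) and its entries. -/
structure SSYT (n : ℕ) where
  rowLen : ℕ → ℕ
  entry : ℕ → ℕ → Option (Letter n)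
  shape_antitone : ∀ r, rowLen (r + 1) ≤ rowLen r
  rows_bounded : ∀ r, 2 * n ≤ r → rowLen r = 0
  entry_isSome_iff : ∀ r c, (entry r c).isSome ↔ c < rowLen r
  rows_weak : ∀ r c₁ c₂ l₁ l₂, c₁ ≤ c₂ → entry r c₁ = some l₁ → entry r c₂ = some l₂ →
    l₁.idx ≤ l₂.idx
  cols_strict : ∀ r₁ r₂ c l₁ l₂, r₁ < r₂ → entry r₁ c = some l₁ → entry r₂ c = some l₂ →
    l₁.idx < l₂.idx

namespace SSYT

variable {n : ℕ}

/-- The positions of the boxes of `T` in reading order of the word `w(T)`: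
columns right to left, each column top to bottom. -/
def posList (T : SSYT n) : List (ℕ × ℕ) :=
  ((List.range (T.rowLen 0)).reverse).flatMap fun c =>
    (List.range (2 * n)).filterMap fun r =>
      if c < T.rowLen r then some (r, c) else none

/-- The word `w(T)` of the tableau, read right to left and top to bottom. -/
def word (T : SSYT n) : List (Letter n) :=
  T.posList.filterMap fun p => T.entry p.1 p.2

/-- The far-eastern word `w'(T)`: rows read right to left, top to bottom. -/
def wordFE (T : SSYT n) : List (Letter n) :=
  (List.range (2 * n)).flatMap fun r =>
    ((List.range (T.rowLen r)).reverse).filterMap fun c => T.entry r c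

/-- `(i,j)`: the number of occurrences of the letter `l` in row `r` of `T`. -/
def count (T : SSYT n) (l : Letter n) (r : ℕ) : ℕ :=
  ((List.range (T.rowLen r)).filter fun c => T.entry r c = some l).length

end SSYT

/-- The cancellation property of a word: every barred letter `ī` has an unbarred `i`
strictly to its right. -/
def Cancel {n : ℕ} (w : List (Letter n)) : Prop :=
  ∀ (p : ℕ) (i : Fin n), w[p]? = some (Sum.inr i) →
    ∃ q, p < q ∧ w[q]? = some (Sum.inl i)

/-- The weight of a letter: `i` contributes `+ε_i`, `ī` contributes `-ε_i`. -/
def wt {n : ℕ} (l : Letter n) (j : ℕ) : ℤ :=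
  match l with
  | Sum.inl i => if (i : ℕ) = j then 1 else 0
  | Sum.inr i => if (i : ℕ) = j then -1 else 0

/-- The `j`-th coordinate of the weight of a word. -/
def wsum {n : ℕ} (w : List (Letter n)) (j : ℕ) : ℤ := (w.map fun l => wt l j).sum

/-- A word is dominant if every prefix has dominant weight `a₁ ≥ a₂ ≥ ⋯ ≥ a_n ≥ 0`
(coordinates `j ≥ n` of `wsum` vanish, so this includes `a_n ≥ 0`). -/
def Dominant {n : ℕ} (w : List (Letter n)) : Prop :=
  ∀ k j, wsum (w.take k) (j + 1) ≤ wsum (w.take k) j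

/-- `domres(λ, μ)`: semi-standard Young tableaux of shape `λ`, word weight `μ`,
whose word is dominant. -/
def domresSet (n : ℕ) (lam mu : ℕ → ℕ) : Set (SSYT n) :=
  {T | T.rowLen = lam ∧ (∀ j, wsum T.word j = (mu j : ℤ)) ∧ Dominant T.word}

/-- The row-entry restriction: row `r` (0-indexed) contains only the unbarred letter `r`
and barred letters `k̄` with `k < r`. -/
def RowRestriction {n : ℕ} (T : SSYT n) : Prop :=
  ∀ (r : ℕ) (l : Letter n), T.count l r ≠ 0 →
    (∃ h : r < n, l = Sum.inl ⟨r, h⟩) ∨ (∃ k : Fin n, (k : ℕ) < r ∧ l = Sum.inr k)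

open Finset

/-!
Fix `j < n` and weigh each letter by its pairing `wtDiff j` with `ε_j - ε_{j+1}`, which lies in
`{-1, 0, 1}`. Every prefix of `w(T)` or of `w'(T)` is an order ideal of boxes, determined by how
many boxes it takes from each column, so its weight is a sum of partial column weights. For `w(T)`
it suffices to consider the ideals made of all columns from some column on, since a partial column
never weighs less than `min 0` (its whole weight); for `w'(T)` the ideals are the rows above `r`
together with row `r` from column `c` on. The row restriction forces the nonzero weights of a column
to read, from the top, `+1` (a `j` in row `j`), `-1` (a `j+1` or `j‾` in row `j+1`), then possibly
`+1` (a `(j+1)‾`) and `-1` (a `j‾`). So the two families compare column by column: a row ideal cut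
at a `j‾` weighs at least the column ideal starting there, and a column ideal weighs at least the
row ideal cut at the first `j‾` in the row of the lowest `j‾` weakly to its right.
-/

section PrefixSums

lemma forall_nonneg_add_sum_take_cons (s x : ℤ) (l : List ℤ) :
    (∀ k, 0 ≤ s + ((x :: l).take k).sum) ↔ 0 ≤ s ∧ ∀ k, 0 ≤ s + x + (l.take k).sum := by
  constructor
  · intro h
    exact ⟨by simpa using h 0, fun k => by simpa [add_assoc] using h (k + 1)⟩
  · rintro ⟨h₀, h⟩ (_ | k)
    · simpa using h₀
    · simpa [add_assoc] using h k

lemma forall_nonneg_add_sum_take_append (s : ℤ) (l₁ l₂ : List ℤ) :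
    (∀ k, 0 ≤ s + ((l₁ ++ l₂).take k).sum) ↔
      (∀ k, 0 ≤ s + (l₁.take k).sum) ∧ ∀ k, 0 ≤ s + l₁.sum + (l₂.take k).sum := by
  induction l₁ generalizing s with
  | nil =>
    simp only [List.nil_append, List.take_nil, List.sum_nil, add_zero]
    exact ⟨fun h => ⟨fun _ => by simpa using h 0, h⟩, fun h => h.2⟩
  | cons x l₁ ih =>
    simp only [List.cons_append, forall_nonneg_add_sum_take_cons]
    rw [ih]
    simp only [List.sum_cons, add_assoc, and_assoc]

lemma forall_nonneg_add_sum_take_filterMap {α : Type*} (g : α → Option ℤ) (s : ℤ) (l : List α) :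
    (∀ k, 0 ≤ s + ((l.filterMap g).take k).sum) ↔
      ∀ k, 0 ≤ s + ((l.map fun a => (g a).getD 0).take k).sum := by
  induction l generalizing s with
  | nil => simp
  | cons a l ih =>
    simp only [List.map_cons, forall_nonneg_add_sum_take_cons]
    rcases h : g a with _ | x
    · simp only [List.filterMap_cons, h, ih, Option.getD_none, add_zero]
      exact ⟨fun h' => ⟨by simpa using h' 0, h'⟩, fun h' => h'.2⟩
    · simp only [List.filterMap_cons, h, forall_nonneg_add_sum_take_cons, ih, Option.getD_some]

lemma forall_nonneg_add_sum_take_flatten (s : ℤ) (L : List (List ℤ)) :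
    (∀ k, 0 ≤ s + (L.flatten.take k).sum) ↔
      ∀ i m, 0 ≤ s + (L.take i).flatten.sum + ((L.getD i []).take m).sum := by
  induction L generalizing s with
  | nil => simp
  | cons x L ih =>
    rw [List.flatten_cons, forall_nonneg_add_sum_take_append, ih]
    constructor
    · rintro ⟨h₀, h⟩ (_ | i) m
      · simpa using h₀ m
      · simpa [add_assoc] using h i m
    · intro h
      exact ⟨fun m => by simpa using h 0 m, fun i m => by simpa [add_assoc] using h (i + 1) m⟩

lemma sum_map_range (f : ℕ → ℤ) (N : ℕ) : ((List.range N).map f).sum = ∑ i ∈ range N, f i := by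
  rw [sum_eq_multiset_sum, range_val, ← Multiset.coe_range, Multiset.map_coe, Multiset.sum_coe]

lemma sum_take_map_reverse_range (f : ℕ → ℤ) (i N : ℕ) :
    (((List.range N).reverse.map f).take i).sum = ∑ c ∈ Ico (N - i) N, f c := by
  induction i generalizing N with
  | zero => simp
  | succ i ih =>
    rcases N with _ | N
    · simp
    rw [List.range_succ, List.reverse_append, List.map_append, List.reverse_singleton,
      List.map_singleton, List.singleton_append, List.take_succ_cons, List.sum_cons, ih,
      Nat.add_sub_add_right, sum_Ico_succ_top (Nat.sub_le N i), add_comm]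

lemma sum_range_ite_lt (f : ℕ → ℤ) (c N : ℕ) :
    ∑ c' ∈ range N, (if c' < c then 0 else f c') = ∑ c' ∈ Ico c N, f c' := by
  rw [sum_ite, sum_const_zero, zero_add]
  congr 1
  ext c'
  simp only [mem_filter, mem_range, mem_Ico, not_lt]
  omega

end PrefixSums

def wtDiff {n : ℕ} (j : ℕ) (l : Letter n) : ℤ := wt l j - wt l (j + 1)

lemma wsum_sub_wsum_succ {n : ℕ} (w : List (Letter n)) (j : ℕ) :
    wsum w j - wsum w (j + 1) = (w.map (wtDiff j)).sum := by
  induction w with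
  | nil => simp [wsum]
  | cons l w ih =>
    simp only [wsum, List.map_cons, List.sum_cons] at ih ⊢
    rw [← ih, wtDiff]
    ring

lemma dominant_iff_forall_sum_take_nonneg {n : ℕ} (w : List (Letter n)) :
    Dominant w ↔ ∀ j k, 0 ≤ ((w.map (wtDiff j)).take k).sum := by
  simp only [Dominant, ← List.map_take, ← wsum_sub_wsum_succ, sub_nonneg]
  exact forall_comm

lemma wtDiff_eq_zero_of_le {n j : ℕ} (hj : n ≤ j) (l : Letter n) : wtDiff j l = 0 := by
  rcases l with i | i <;>
  · have := i.isLt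
    simp only [wtDiff, wt]
    split_ifs <;> omega

/-- For `j < n` the positions `j`, `j + 1`, `2n - 2 - j`, `2n - 1 - j` in the alphabet are the
letters `j`, `j+1`, `(j+1)‾`, `j‾` (0-indexed); for `j = n - 1` they coincide in pairs (`j+1` with
`j‾`, `(j+1)‾` with `j`), consistently with the signs. -/
def idxWtDiff (n j e : ℕ) : ℤ :=
  if e = j ∨ e = 2 * n - 2 - j then 1 else if e = j + 1 ∨ e = 2 * n - 1 - j then -1 else 0

lemma wtDiff_eq_idxWtDiff {n j : ℕ} (hj : j < n) (l : Letter n) :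
    wtDiff j l = idxWtDiff n j l.idx := by
  rcases l with i | i <;>
  · have := i.isLt
    simp only [wtDiff, wt, idxWtDiff, Letter.idx]
    split_ifs <;> omega

lemma neg_one_le_wtDiff {n : ℕ} (j : ℕ) (l : Letter n) : -1 ≤ wtDiff j l := by
  rcases l with i | i <;> · simp only [wtDiff, wt]; split_ifs <;> omega

lemma wtDiff_le_one {n : ℕ} (j : ℕ) (l : Letter n) : wtDiff j l ≤ 1 := by
  rcases l with i | i <;> · simp only [wtDiff, wt]; split_ifs <;> omega

/- Column heights of the order ideals that matter for `w(T)` (all columns from `c` on) and for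
`w'(T)` (the rows above `r`, and row `r` from column `c` on). -/
def colsFrom (n c : ℕ) : ℕ → ℕ := fun c' => if c' < c then 0 else 2 * n

def rowsUpTo (r c : ℕ) : ℕ → ℕ := fun c' => if c' < c then r else r + 1

namespace SSYT

variable {n : ℕ} (T : SSYT n)

lemma rowLen_antitone : Antitone T.rowLen := antitone_nat_of_succ_le T.shape_antitone

lemma entry_eq_none_of_rowLen_le {r c : ℕ} (h : T.rowLen r ≤ c) : T.entry r c = none :=
  Option.not_isSome_iff_eq_none.mp fun hs => ((T.entry_isSome_iff r c).mp hs).not_ge h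

lemma lt_rowLen_of_entry_eq_some {r c : ℕ} {l : Letter n} (h : T.entry r c = some l) :
    c < T.rowLen r :=
  (T.entry_isSome_iff r c).mp (by simp [h])

lemma exists_entry_eq_some {r c : ℕ} (h : c < T.rowLen r) : ∃ l, T.entry r c = some l :=
  Option.isSome_iff_exists.mp ((T.entry_isSome_iff r c).mpr h)

lemma lt_two_mul_of_entry_eq_some {r c : ℕ} {l : Letter n} (h : T.entry r c = some l) :
    r < 2 * n := by
  by_contra hr
  have := T.rows_bounded r (not_lt.mp hr)
  have := T.lt_rowLen_of_entry_eq_some h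
  omega

lemma idx_lt_of_lt_of_le {r s c c' : ℕ} {l l' : Letter n} (hr : r < s) (hc : c ≤ c')
    (h : T.entry r c = some l) (h' : T.entry s c' = some l') : l.idx < l'.idx := by
  obtain ⟨m, hm⟩ := T.exists_entry_eq_some (r := r) (c := c')
    ((T.lt_rowLen_of_entry_eq_some h').trans_le (T.rowLen_antitone hr.le))
  exact (T.rows_weak r c c' l m hc h hm).trans_lt (T.cols_strict r s c' m l' hr hm h')

lemma idx_le_of_le_of_le {r s c c' : ℕ} {l l' : Letter n} (hr : r ≤ s) (hc : c ≤ c')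
    (h : T.entry r c = some l) (h' : T.entry s c' = some l') : l.idx ≤ l'.idx := by
  rcases hr.eq_or_lt with rfl | hr
  · exact T.rows_weak r c c' l l' hc h h'
  · exact (T.idx_lt_of_lt_of_le hr hc h h').le

def IsBarAt (j r c : ℕ) : Prop := ∃ l, T.entry r c = some l ∧ l.idx = 2 * n - 1 - j

lemma lt_two_mul_of_isBarAt {j r c : ℕ} (h : T.IsBarAt j r c) : r < 2 * n :=
  T.lt_two_mul_of_entry_eq_some h.choose_spec.1

def cellWt (j r c : ℕ) : ℤ := ((T.entry r c).map (wtDiff j)).getD 0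

def colSum (j c ρ : ℕ) : ℤ := ∑ r ∈ range ρ, T.cellWt j r c

def idealSum (j : ℕ) (h : ℕ → ℕ) : ℤ := ∑ c ∈ range (T.rowLen 0), T.colSum j c (h c)

variable {T} {j : ℕ}

lemma cellWt_of_entry_eq_some {r c : ℕ} {l : Letter n} (h : T.entry r c = some l) :
    T.cellWt j r c = wtDiff j l := by
  simp [cellWt, h]

lemma cellWt_of_entry_eq_none {r c : ℕ} (h : T.entry r c = none) : T.cellWt j r c = 0 := by
  simp [cellWt, h]

lemma cellWt_of_rowLen_le {r c : ℕ} (h : T.rowLen r ≤ c) : T.cellWt j r c = 0 :=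
  cellWt_of_entry_eq_none (T.entry_eq_none_of_rowLen_le h)

lemma cellWt_eq_idxWtDiff (hj : j < n) {r c : ℕ} {l : Letter n} (h : T.entry r c = some l) :
    T.cellWt j r c = idxWtDiff n j l.idx := by
  rw [cellWt_of_entry_eq_some h, wtDiff_eq_idxWtDiff hj]

lemma neg_one_le_cellWt (r c : ℕ) : -1 ≤ T.cellWt j r c := by
  rcases h : T.entry r c with _ | l
  · simp [cellWt_of_entry_eq_none h]
  · rw [cellWt_of_entry_eq_some h]
    exact neg_one_le_wtDiff j l

lemma cellWt_le_one (r c : ℕ) : T.cellWt j r c ≤ 1 := by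
  rcases h : T.entry r c with _ | l
  · simp [cellWt_of_entry_eq_none h]
  · rw [cellWt_of_entry_eq_some h]
    exact wtDiff_le_one j l

lemma cellWt_nonpos_of_le_idx (hj : j < n) {r c : ℕ} {l : Letter n} (h : T.entry r c = some l)
    (hl : 2 * n - 1 - j ≤ l.idx) : T.cellWt j r c ≤ 0 := by
  rw [cellWt_eq_idxWtDiff hj h, idxWtDiff]
  split_ifs <;> omega

lemma cellWt_nonpos_of_isBarAt (hj : j < n) {r s c c' : ℕ} (hb : T.IsBarAt j r c) (hr : r ≤ s)
    (hc : c ≤ c') : T.cellWt j s c' ≤ 0 := by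
  obtain ⟨l, hl, hidx⟩ := hb
  rcases h : T.entry s c' with _ | m
  · simp [cellWt_of_entry_eq_none h]
  · exact cellWt_nonpos_of_le_idx hj h (hidx ▸ T.idx_le_of_le_of_le hr hc hl h)

lemma cellWt_eq_zero_of_isBarAt (hj : j < n) {r s c c' : ℕ} (hb : T.IsBarAt j r c) (hr : r < s)
    (hc : c ≤ c') : T.cellWt j s c' = 0 := by
  obtain ⟨l, hl, hidx⟩ := hb
  rcases h : T.entry s c' with _ | m
  · exact cellWt_of_entry_eq_none h
  · have := T.idx_lt_of_lt_of_le hr hc hl h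
    rw [cellWt_eq_idxWtDiff hj h, idxWtDiff]
    split_ifs <;> omega

lemma colSum_zero (c : ℕ) : T.colSum j c 0 = 0 := sum_range_zero _

lemma colSum_succ (c ρ : ℕ) : T.colSum j c (ρ + 1) = T.colSum j c ρ + T.cellWt j ρ c :=
  sum_range_succ _ _

lemma colSum_add_sum_Ico {c ρ ρ' : ℕ} (h : ρ ≤ ρ') :
    T.colSum j c ρ + ∑ s ∈ Ico ρ ρ', T.cellWt j s c = T.colSum j c ρ' :=
  sum_range_add_sum_Ico _ h

lemma colSum_le_colSum {c ρ ρ' : ℕ} (hρ : ρ ≤ ρ') (h : ∀ s, ρ ≤ s → s < ρ' → 0 ≤ T.cellWt j s c) :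
    T.colSum j c ρ ≤ T.colSum j c ρ' := by
  rw [← colSum_add_sum_Ico hρ, le_add_iff_nonneg_right]
  exact sum_nonneg fun s hs => h s (mem_Ico.mp hs).1 (mem_Ico.mp hs).2

lemma colSum_le_colSum_of_nonpos {c ρ ρ' : ℕ} (hρ : ρ ≤ ρ')
    (h : ∀ s, ρ ≤ s → s < ρ' → T.cellWt j s c ≤ 0) : T.colSum j c ρ' ≤ T.colSum j c ρ := by
  rw [← colSum_add_sum_Ico hρ, add_le_iff_nonpos_right]
  exact sum_nonpos fun s hs => h s (mem_Ico.mp hs).1 (mem_Ico.mp hs).2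

lemma colSum_eq_of_two_mul_le {c ρ : ℕ} (h : 2 * n ≤ ρ) :
    T.colSum j c ρ = T.colSum j c (2 * n) := by
  have hzero : ∀ s, 2 * n ≤ s → T.cellWt j s c = 0 := fun s hs =>
    cellWt_of_rowLen_le (by rw [T.rows_bounded s hs]; exact Nat.zero_le c)
  exact le_antisymm (colSum_le_colSum_of_nonpos h fun s hs _ => (hzero s hs).le)
    (colSum_le_colSum h fun s hs _ => (hzero s hs).ge)

lemma colSum_eq_of_isBarAt (hj : j < n) {s c ρ : ℕ} (hb : T.IsBarAt j s c) (hρ : s < ρ) :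
    T.colSum j c ρ = T.colSum j c (s + 1) := by
  rw [← colSum_add_sum_Ico hρ, sum_eq_zero fun t ht =>
    cellWt_eq_zero_of_isBarAt hj hb (Nat.lt_of_succ_le (mem_Ico.mp ht).1) le_rfl, add_zero]

lemma idealSum_le_idealSum {h₁ h₂ : ℕ → ℕ}
    (h : ∀ c < T.rowLen 0, T.colSum j c (h₁ c) ≤ T.colSum j c (h₂ c)) :
    T.idealSum j h₁ ≤ T.idealSum j h₂ :=
  sum_le_sum fun c hc => h c (mem_range.mp hc)

lemma idealSum_const_zero : T.idealSum j (fun _ => 0) = 0 := by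
  simp [idealSum, colSum_zero]

lemma sum_Ico_colSum_eq_idealSum_colsFrom (c : ℕ) :
    ∑ c' ∈ Ico c (T.rowLen 0), T.colSum j c' (2 * n) = T.idealSum j (colsFrom n c) := by
  rw [← sum_range_ite_lt]
  refine sum_congr rfl fun c' _ => ?_
  simp only [colsFrom]
  split_ifs <;> simp [colSum_zero]

lemma idealSum_rowsUpTo (r c : ℕ) :
    T.idealSum j (rowsUpTo r c) =
      T.idealSum j (fun _ => r) + ∑ c' ∈ Ico c (T.rowLen 0), T.cellWt j r c' := by
  rw [← sum_range_ite_lt, idealSum, idealSum, ← sum_add_distrib]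
  refine sum_congr rfl fun c' _ => ?_
  simp only [rowsUpTo]
  split_ifs <;> simp [colSum_succ]

end SSYT

namespace RowRestriction

open SSYT

variable {n : ℕ} {T : SSYT n} {j : ℕ}

lemma idx_cases (hT : RowRestriction T) {r c : ℕ} {l : Letter n} (h : T.entry r c = some l) :
    l.idx = r ∨ (n ≤ l.idx ∧ 2 * n - r ≤ l.idx ∧ l.idx < 2 * n) := by
  have hcount : T.count l r ≠ 0 := (List.length_pos_of_mem (List.mem_filter.mpr
    ⟨List.mem_range.mpr (T.lt_rowLen_of_entry_eq_some h), by simp [h]⟩)).ne'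
  rcases hT r l hcount with ⟨_, rfl⟩ | ⟨k, hk, rfl⟩
  · simp [Letter.idx]
  · have := k.isLt
    simp only [Letter.idx]
    omega

lemma succ_le_of_isBarAt (hT : RowRestriction T) (hj : j < n) {r c : ℕ} (hb : T.IsBarAt j r c) :
    j + 1 ≤ r := by
  obtain ⟨l, hl, hidx⟩ := hb
  rcases hT.idx_cases hl with h | h <;> omega

lemma cellWt_eq_zero_of_lt (hT : RowRestriction T) (hj : j < n) {r c : ℕ} (hr : r < j) :
    T.cellWt j r c = 0 := by
  rcases h : T.entry r c with _ | l
  · exact cellWt_of_entry_eq_none h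
  · have := hT.idx_cases h
    rw [cellWt_eq_idxWtDiff hj h, idxWtDiff]
    split_ifs <;> omega

lemma cellWt_self_nonneg (hT : RowRestriction T) (hj : j < n) (c : ℕ) : 0 ≤ T.cellWt j j c := by
  rcases h : T.entry j c with _ | l
  · simp [cellWt_of_entry_eq_none h]
  · have := hT.idx_cases h
    rw [cellWt_eq_idxWtDiff hj h, idxWtDiff]
    split_ifs <;> omega

/-- A `-1` in row `j + 1` (a `j+1` or a `j‾`) lies below a `j`. -/
lemma cellWt_self_eq_one (hT : RowRestriction T) (hj : j < n) {c : ℕ}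
    (h : T.cellWt j (j + 1) c = -1) : T.cellWt j j c = 1 := by
  rcases hl : T.entry (j + 1) c with _ | l
  · simp [cellWt_of_entry_eq_none hl] at h
  obtain ⟨m, hm⟩ := T.exists_entry_eq_some (r := j) (c := c)
    ((T.lt_rowLen_of_entry_eq_some hl).trans_le (T.rowLen_antitone (Nat.le_succ j)))
  have hlt := T.cols_strict j (j + 1) c m l (Nat.lt_succ_self j) hm hl
  have := hT.idx_cases hm
  rw [cellWt_eq_idxWtDiff hj hl, idxWtDiff] at h
  rw [cellWt_eq_idxWtDiff hj hm, idxWtDiff]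
  split_ifs at h ⊢ <;> omega

lemma cellWt_succ_eq_neg_one (hT : RowRestriction T) (hj : j < n) {c : ℕ} {l : Letter n}
    (h : T.entry (j + 1) c = some l) (hl : l.idx ≤ 2 * n - 1 - j) : T.cellWt j (j + 1) c = -1 := by
  have := hT.idx_cases h
  rw [cellWt_eq_idxWtDiff hj h, idxWtDiff]
  split_ifs <;> omega

lemma cellWt_nonneg_of_not_isBarAt (hT : RowRestriction T) (hj : j < n) {r c : ℕ}
    (hr : j + 2 ≤ r) (hb : ¬ T.IsBarAt j r c) : 0 ≤ T.cellWt j r c := by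
  rcases h : T.entry r c with _ | l
  · simp [cellWt_of_entry_eq_none h]
  · have hne : l.idx ≠ 2 * n - 1 - j := fun he => hb ⟨l, h, he⟩
    have := hT.idx_cases h
    rw [cellWt_eq_idxWtDiff hj h, idxWtDiff]
    split_ifs <;> omega

lemma cellWt_eq_zero_of_idx_lt (hT : RowRestriction T) (hj : j < n) {r c : ℕ} {l : Letter n}
    (hr : j + 2 ≤ r) (h : T.entry r c = some l) (hl : l.idx < 2 * n - 2 - j) :
    T.cellWt j r c = 0 := by
  have := hT.idx_cases h
  rw [cellWt_eq_idxWtDiff hj h, idxWtDiff]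
  split_ifs <;> omega

lemma colSum_nonneg_of_le (hT : RowRestriction T) (hj : j < n) {ρ : ℕ} (hρ : ρ ≤ j + 2) (c : ℕ) :
    0 ≤ T.colSum j c ρ := by
  have hzero : ∀ ρ ≤ j, T.colSum j c ρ = 0 := fun ρ hρ =>
    sum_eq_zero fun s hs => hT.cellWt_eq_zero_of_lt hj ((mem_range.mp hs).trans_le hρ)
  have hpair : 0 ≤ T.cellWt j j c + T.cellWt j (j + 1) c := by
    rcases (neg_one_le_cellWt (j + 1) c).eq_or_lt with h | h
    · rw [← h, hT.cellWt_self_eq_one hj h.symm]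
      norm_num
    · linarith [hT.cellWt_self_nonneg hj c]
  rcases (show ρ ≤ j ∨ ρ = j + 1 ∨ ρ = j + 2 by omega) with h | rfl | rfl
  · exact (hzero ρ h).ge
  · rw [colSum_succ, hzero j le_rfl, zero_add]
    exact hT.cellWt_self_nonneg hj c
  · rw [colSum_succ, colSum_succ, hzero j le_rfl, zero_add]
    exact hpair

lemma colSum_nonneg_of_forall_not_isBarAt (hT : RowRestriction T) (hj : j < n) {c ρ : ℕ}
    (h : ∀ s < ρ, ¬ T.IsBarAt j s c) : 0 ≤ T.colSum j c ρ :=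
  (hT.colSum_nonneg_of_le hj (min_le_right ρ (j + 2)) c).trans <|
    colSum_le_colSum (min_le_left _ _) fun s hs hs' =>
      hT.cellWt_nonneg_of_not_isBarAt hj (by omega) (h s hs')

/-- Above a `j‾` the partial weight of a column is nonnegative, and below it the column weight
is already complete. -/
lemma min_zero_le_colSum (hT : RowRestriction T) (hj : j < n) (c ρ : ℕ) :
    min 0 (T.colSum j c (2 * n)) ≤ T.colSum j c ρ := by
  by_cases hb : ∃ s < ρ, T.IsBarAt j s c
  · obtain ⟨s, hs, hbar⟩ := hb
    rw [colSum_eq_of_isBarAt hj hbar hs,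
      ← colSum_eq_of_isBarAt hj hbar (T.lt_two_mul_of_isBarAt hbar)]
    exact min_le_right _ _
  · push Not at hb
    exact (min_le_left _ _).trans (hT.colSum_nonneg_of_forall_not_isBarAt hj hb)

lemma colSum_succ_succ_nonpos (hT : RowRestriction T) (hj : j < n) {c : ℕ} {l : Letter n}
    (h : T.entry (j + 1) c = some l) (hl : l.idx ≤ 2 * n - 1 - j) : T.colSum j c (j + 2) ≤ 0 := by
  have hzero : T.colSum j c j = 0 :=
    sum_eq_zero fun s hs => hT.cellWt_eq_zero_of_lt hj (mem_range.mp hs)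
  rw [colSum_succ, colSum_succ, hzero, hT.cellWt_succ_eq_neg_one hj h hl]
  linarith [cellWt_le_one (T := T) (j := j) j c]

lemma colSum_nonpos_of_idx_lt (hT : RowRestriction T) (hj : j < n) {r c : ℕ} {l : Letter n}
    (hr : j + 2 ≤ r) (h : T.entry r c = some l) (hl : l.idx < 2 * n - 1 - j) :
    T.colSum j c r ≤ 0 := by
  induction r, hr using Nat.le_induction generalizing l with
  | base =>
    obtain ⟨m, hm⟩ := T.exists_entry_eq_some (r := j + 1) (c := c)
      ((T.lt_rowLen_of_entry_eq_some h).trans_le (T.rowLen_antitone (Nat.le_succ _)))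
    have := T.cols_strict (j + 1) (j + 2) c m l (Nat.lt_succ_self _) hm h
    exact hT.colSum_succ_succ_nonpos hj hm (by omega)
  | succ r hr ih =>
    obtain ⟨m, hm⟩ := T.exists_entry_eq_some (r := r) (c := c)
      ((T.lt_rowLen_of_entry_eq_some h).trans_le (T.rowLen_antitone (Nat.le_succ _)))
    have := T.cols_strict r (r + 1) c m l (Nat.lt_succ_self _) hm h
    rw [colSum_succ, hT.cellWt_eq_zero_of_idx_lt hj hr hm (by omega), add_zero]
    exact ih hm (by omega)

lemma colSum_succ_nonpos_of_isBarAt (hT : RowRestriction T) (hj : j < n) {r c : ℕ}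
    (hr : j + 2 ≤ r) (hb : T.IsBarAt j r c) : T.colSum j c (r + 1) ≤ 0 := by
  obtain ⟨l, hl, hidx⟩ := hb
  obtain ⟨r, rfl⟩ : ∃ r', r = r' + 1 := ⟨r - 1, by omega⟩
  obtain ⟨m, hm⟩ := T.exists_entry_eq_some (r := r) (c := c)
    ((T.lt_rowLen_of_entry_eq_some hl).trans_le (T.rowLen_antitone (Nat.le_succ _)))
  have hlt := T.cols_strict r (r + 1) c m l (Nat.lt_succ_self _) hm hl
  have hbar : T.cellWt j (r + 1) c = -1 := by
    rw [cellWt_eq_idxWtDiff hj hl, idxWtDiff]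
    split_ifs <;> omega
  have hcol : T.colSum j c (r + 1) ≤ 1 := by
    rcases (show r = j + 1 ∨ j + 2 ≤ r by omega) with rfl | hr'
    · linarith [hT.colSum_succ_succ_nonpos hj hm (by omega)]
    · rw [colSum_succ]
      linarith [hT.colSum_nonpos_of_idx_lt hj hr' hm (by omega),
        cellWt_le_one (T := T) (j := j) r c]
  rw [colSum_succ, hbar]
  linarith

lemma idealSum_rowsUpTo_nonneg_of_le (hT : RowRestriction T) (hj : j < n) {r : ℕ}
    (hr : r ≤ j + 1) (c : ℕ) : 0 ≤ T.idealSum j (rowsUpTo r c) :=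
  sum_nonneg fun c' _ => hT.colSum_nonneg_of_le hj (by simp only [rowsUpTo]; split_ifs <;> omega) c'

lemma idealSum_colsFrom_le_rowsUpTo (hT : RowRestriction T) (hj : j < n) {r c : ℕ}
    (hb : T.IsBarAt j r c) : T.idealSum j (colsFrom n c) ≤ T.idealSum j (rowsUpTo r c) := by
  refine idealSum_le_idealSum fun c' _ => ?_
  simp only [colsFrom, rowsUpTo]
  split_ifs with hc
  · rw [colSum_zero]
    refine hT.colSum_nonneg_of_forall_not_isBarAt hj fun s hs ⟨m, hm, hidx⟩ => ?_
    obtain ⟨l, hl, hlidx⟩ := hb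
    have := T.idx_lt_of_lt_of_le hs hc.le hm hl
    omega
  · exact colSum_le_colSum_of_nonpos (T.lt_two_mul_of_isBarAt hb) fun s hs _ =>
      cellWt_nonpos_of_isBarAt hj hb (by omega) (not_lt.mp hc)

lemma idealSum_rowsUpTo_le_of_isBarAt (hT : RowRestriction T) (hj : j < n) {r c₂ : ℕ}
    (hr : j + 2 ≤ r) (hb : T.IsBarAt j r c₂) (hfirst : ∀ c < c₂, ¬ T.IsBarAt j r c) (c : ℕ) :
    T.idealSum j (rowsUpTo r c₂) ≤ T.idealSum j (rowsUpTo r c) := by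
  refine idealSum_le_idealSum fun c' _ => ?_
  simp only [rowsUpTo]
  split_ifs with h₂ h
  · exact le_rfl
  · rw [colSum_succ, le_add_iff_nonneg_right]
    exact hT.cellWt_nonneg_of_not_isBarAt hj hr (hfirst c' h₂)
  · rw [colSum_succ, add_le_iff_nonpos_right]
    exact cellWt_nonpos_of_isBarAt hj hb le_rfl (not_lt.mp h₂)
  · exact le_rfl

lemma idealSum_const_le_rowsUpTo (hT : RowRestriction T) (hj : j < n) {r : ℕ} (hr : j + 2 ≤ r)
    (hb : ∀ c, ¬ T.IsBarAt j r c) (c : ℕ) :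
    T.idealSum j (fun _ => r) ≤ T.idealSum j (rowsUpTo r c) := by
  refine idealSum_le_idealSum fun c' _ => ?_
  simp only [rowsUpTo]
  split_ifs
  · exact le_rfl
  · rw [colSum_succ, le_add_iff_nonneg_right]
    exact hT.cellWt_nonneg_of_not_isBarAt hj hr (hb c')

theorem idealSum_rowsUpTo_nonneg (hT : RowRestriction T) (hj : j < n)
    (hcols : ∀ c, 0 ≤ T.idealSum j (colsFrom n c)) (r c : ℕ) :
    0 ≤ T.idealSum j (rowsUpTo r c) := by
  classical
  induction r generalizing c with
  | zero => exact hT.idealSum_rowsUpTo_nonneg_of_le hj (Nat.zero_le _) c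
  | succ r ih =>
    rcases le_or_gt (r + 1) (j + 1) with hr | hr
    · exact hT.idealSum_rowsUpTo_nonneg_of_le hj hr c
    by_cases hb : ∃ c₂, T.IsBarAt j (r + 1) c₂
    · calc 0 ≤ T.idealSum j (colsFrom n (Nat.find hb)) := hcols _
        _ ≤ T.idealSum j (rowsUpTo (r + 1) (Nat.find hb)) :=
          hT.idealSum_colsFrom_le_rowsUpTo hj (Nat.find_spec hb)
        _ ≤ T.idealSum j (rowsUpTo (r + 1) c) :=
          hT.idealSum_rowsUpTo_le_of_isBarAt hj hr (Nat.find_spec hb)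
            (fun _ h => Nat.find_min hb h) c
    · push Not at hb
      calc 0 ≤ T.idealSum j (rowsUpTo r 0) := ih 0
        _ = T.idealSum j (fun _ => r + 1) := rfl
        _ ≤ T.idealSum j (rowsUpTo (r + 1) c) := hT.idealSum_const_le_rowsUpTo hj hr hb c

lemma exists_lowest_isBarAt {c : ℕ} (h : ∃ r c₀, c ≤ c₀ ∧ T.IsBarAt j r c₀) :
    ∃ r c₀, c ≤ c₀ ∧ T.IsBarAt j r c₀ ∧ ∀ s, r < s → ∀ c', c ≤ c' → ¬ T.IsBarAt j s c' := by
  classical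
  obtain ⟨r, c₀, hc₀, hb⟩ := h
  obtain ⟨c₁, hc₁, hb₁⟩ := Nat.findGreatest_spec (P := fun s => ∃ c₀, c ≤ c₀ ∧ T.IsBarAt j s c₀)
    (T.lt_two_mul_of_isBarAt hb).le ⟨c₀, hc₀, hb⟩
  exact ⟨_, c₁, hc₁, hb₁, fun s hs c' hc' hb' =>
    Nat.findGreatest_is_greatest hs (T.lt_two_mul_of_isBarAt hb').le ⟨c', hc', hb'⟩⟩

lemma colSum_le_colSum_two_mul_of_lowest (hT : RowRestriction T) (hj : j < n) {r c c' : ℕ}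
    (hr : j + 1 ≤ r) (hr' : r < 2 * n) (hc : c ≤ c')
    (hlow : ∀ s, r < s → ∀ c', c ≤ c' → ¬ T.IsBarAt j s c') :
    T.colSum j c' (r + 1) ≤ T.colSum j c' (2 * n) :=
  colSum_le_colSum hr' fun s hs _ =>
    hT.cellWt_nonneg_of_not_isBarAt hj (by omega) (hlow s (by omega) c' hc)

lemma idealSum_const_le_colsFrom (hT : RowRestriction T) (hj : j < n) {c c₀ : ℕ} (hc₀ : c ≤ c₀)
    (hb : T.IsBarAt j (j + 1) c₀)
    (hlow : ∀ s, j + 1 < s → ∀ c', c ≤ c' → ¬ T.IsBarAt j s c') :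
    T.idealSum j (fun _ => j + 2) ≤ T.idealSum j (colsFrom n c) := by
  refine idealSum_le_idealSum fun c' _ => ?_
  simp only [colsFrom]
  split_ifs with hc
  · obtain ⟨l, hl, hidx⟩ := hb
    obtain ⟨m, hm⟩ := T.exists_entry_eq_some (r := j + 1) (c := c')
      (by have := T.lt_rowLen_of_entry_eq_some hl; omega)
    rw [colSum_zero]
    exact hT.colSum_succ_succ_nonpos hj hm (hidx ▸ T.rows_weak _ _ _ _ _ (by omega) hm hl)
  · exact hT.colSum_le_colSum_two_mul_of_lowest hj le_rfl (T.lt_two_mul_of_isBarAt hb)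
      (not_lt.mp hc) hlow

lemma idealSum_rowsUpTo_le_colsFrom (hT : RowRestriction T) (hj : j < n) {r c c₀ c₂ : ℕ}
    (hr : j + 2 ≤ r) (hc₀ : c ≤ c₀) (hb : T.IsBarAt j r c₀) (hb₂ : T.IsBarAt j r c₂)
    (hfirst : ∀ c < c₂, ¬ T.IsBarAt j r c)
    (hlow : ∀ s, r < s → ∀ c', c ≤ c' → ¬ T.IsBarAt j s c') :
    T.idealSum j (rowsUpTo r (min c₂ c)) ≤ T.idealSum j (colsFrom n c) := by
  have hc₂ : c₂ ≤ c₀ := not_lt.mp fun h => hfirst c₀ h hb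
  obtain ⟨l, hl, hidx⟩ := hb
  obtain ⟨l₂, hl₂, hidx₂⟩ := hb₂
  have hbox : ∀ c' < c, ∃ m, T.entry r c' = some m ∧ m.idx ≤ 2 * n - 1 - j := fun c' hc' => by
    obtain ⟨m, hm⟩ := T.exists_entry_eq_some (r := r) (c := c')
      (by have := T.lt_rowLen_of_entry_eq_some hl; omega)
    exact ⟨m, hm, hidx ▸ T.rows_weak r c' c₀ m l (by omega) hm hl⟩
  refine idealSum_le_idealSum fun c' _ => ?_
  simp only [colsFrom, rowsUpTo]
  split_ifs with h₁ h₂ h₂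
  · obtain ⟨m, hm, hmle⟩ := hbox c' h₂
    rw [colSum_zero]
    exact hT.colSum_nonpos_of_idx_lt hj hr hm
      (hmle.lt_of_ne fun he => hfirst c' (by omega) ⟨m, hm, he⟩)
  · omega
  · obtain ⟨m, hm, hmle⟩ := hbox c' h₂
    have := T.rows_weak r c₂ c' l₂ m (by omega) hl₂ hm
    rw [colSum_zero]
    exact hT.colSum_succ_nonpos_of_isBarAt hj hr ⟨m, hm, by omega⟩
  · exact hT.colSum_le_colSum_two_mul_of_lowest hj (by omega) (T.lt_two_mul_of_entry_eq_some hl)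
      (not_lt.mp h₂) hlow

theorem idealSum_colsFrom_nonneg (hT : RowRestriction T) (hj : j < n)
    (hrows : ∀ r c, 0 ≤ T.idealSum j (rowsUpTo r c)) (c : ℕ) :
    0 ≤ T.idealSum j (colsFrom n c) := by
  classical
  by_cases h : ∃ r c₀, c ≤ c₀ ∧ T.IsBarAt j r c₀
  · obtain ⟨r, c₀, hc₀, hb, hlow⟩ := exists_lowest_isBarAt h
    rcases (hT.succ_le_of_isBarAt hj hb).eq_or_lt with rfl | hr
    · calc 0 ≤ T.idealSum j (rowsUpTo (j + 1) 0) := hrows _ _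
        _ = T.idealSum j (fun _ => j + 2) := rfl
        _ ≤ _ := hT.idealSum_const_le_colsFrom hj hc₀ hb hlow
    · have hex : ∃ c₂, T.IsBarAt j r c₂ := ⟨c₀, hb⟩
      exact (hrows r _).trans (hT.idealSum_rowsUpTo_le_colsFrom hj hr hc₀ hb
        (Nat.find_spec hex) (fun _ h => Nat.find_min hex h) hlow)
  · push Not at h
    rw [← idealSum_const_zero (T := T) (j := j)]
    refine idealSum_le_idealSum fun c' _ => ?_
    simp only [colsFrom]
    split_ifs with hc
    · exact le_rfl
    · rw [colSum_zero]
      exact hT.colSum_nonneg_of_forall_not_isBarAt hj fun s _ => h s c' (not_lt.mp hc)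

end RowRestriction

namespace SSYT

variable {n : ℕ} (T : SSYT n) (j : ℕ)

lemma word_eq_filterMap : T.word = ((List.range (T.rowLen 0)).reverse.flatMap fun c =>
    (List.range (2 * n)).map fun r => (r, c)).filterMap fun p => T.entry p.1 p.2 := by
  rw [word, posList, List.filterMap_flatMap, List.filterMap_flatMap]
  congr 1
  funext c
  rw [List.filterMap_filterMap, List.filterMap_map]
  congr 1
  funext r
  by_cases h : c < T.rowLen r
  · simp [h]
  · simp [h, T.entry_eq_none_of_rowLen_le (not_lt.mp h)]

lemma wordFE_eq_filterMap : T.wordFE = ((List.range (2 * n)).flatMap fun r =>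
    (List.range (T.rowLen 0)).reverse.map fun c => (r, c)).filterMap fun p => T.entry p.1 p.2 := by
  rw [wordFE, List.filterMap_flatMap]
  congr 1
  funext r
  obtain ⟨d, hd⟩ : ∃ d, T.rowLen 0 = T.rowLen r + d :=
    ⟨_, (Nat.add_sub_of_le (T.rowLen_antitone (Nat.zero_le r))).symm⟩
  have hnil : ((List.range d).map (T.rowLen r + ·)).reverse.filterMap (fun c => T.entry r c) = [] :=
    List.filterMap_eq_nil_iff.mpr fun a ha => by
      obtain ⟨x, -, rfl⟩ := List.mem_map.mp (List.mem_reverse.mp ha)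
      exact T.entry_eq_none_of_rowLen_le (Nat.le_add_right _ _)
  rw [List.filterMap_map, hd, List.range_add, List.reverse_append, List.filterMap_append]
  exact (congrArg (· ++ _) hnil).symm

def colBlocks : List (List ℤ) :=
  (List.range (T.rowLen 0)).reverse.map fun c => (List.range (2 * n)).map fun r => T.cellWt j r c

def rowBlocks : List (List ℤ) :=
  (List.range (2 * n)).map fun r => (List.range (T.rowLen 0)).reverse.map fun c => T.cellWt j r c

lemma forall_sum_take_word_iff_colBlocks :
    (∀ k, 0 ≤ ((T.word.map (wtDiff j)).take k).sum) ↔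
      ∀ k, 0 ≤ ((T.colBlocks j).flatten.take k).sum := by
  have := forall_nonneg_add_sum_take_filterMap (fun p => (T.entry p.1 p.2).map (wtDiff j)) 0
    ((List.range (T.rowLen 0)).reverse.flatMap fun c => (List.range (2 * n)).map fun r => (r, c))
  simp only [zero_add] at this
  rw [word_eq_filterMap, List.map_filterMap, this, colBlocks, List.map_flatMap, List.flatMap_def]
  simp only [List.map_map]
  rfl

lemma forall_sum_take_wordFE_iff_rowBlocks :
    (∀ k, 0 ≤ ((T.wordFE.map (wtDiff j)).take k).sum) ↔
      ∀ k, 0 ≤ ((T.rowBlocks j).flatten.take k).sum := by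
  have := forall_nonneg_add_sum_take_filterMap (fun p => (T.entry p.1 p.2).map (wtDiff j)) 0
    ((List.range (2 * n)).flatMap fun r => (List.range (T.rowLen 0)).reverse.map fun c => (r, c))
  simp only [zero_add] at this
  rw [wordFE_eq_filterMap, List.map_filterMap, this, rowBlocks, List.map_flatMap, List.flatMap_def]
  simp only [List.map_map]
  rfl

lemma sum_flatten_take_colBlocks (i : ℕ) :
    ((T.colBlocks j).take i).flatten.sum = T.idealSum j (colsFrom n (T.rowLen 0 - i)) := by
  have hcol : (List.sum ∘ fun c => (List.range (2 * n)).map fun r => T.cellWt j r c) =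
      fun c => T.colSum j c (2 * n) := funext fun c => sum_map_range _ _
  rw [List.sum_flatten, List.map_take, colBlocks, List.map_map, hcol, sum_take_map_reverse_range,
    sum_Ico_colSum_eq_idealSum_colsFrom]

lemma sum_take_getD_colBlocks (i m : ℕ) :
    (((T.colBlocks j).getD i []).take m).sum =
      if i < T.rowLen 0 then T.colSum j (T.rowLen 0 - 1 - i) (min m (2 * n)) else 0 := by
  split_ifs with hi
  · have : (T.colBlocks j).getD i [] =
        (List.range (2 * n)).map fun r => T.cellWt j r (T.rowLen 0 - 1 - i) := by
      simp [colBlocks, List.getD_eq_getElem?_getD, hi]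
    rw [this, ← List.map_take, List.take_range, sum_map_range]
    rfl
  · rw [List.getD_eq_default _ _ (by simp [colBlocks]; omega)]
    simp

lemma sum_flatten_take_rowBlocks (i : ℕ) :
    ((T.rowBlocks j).take i).flatten.sum = T.idealSum j (fun _ => min i (2 * n)) := by
  have hrow : (List.sum ∘ fun r => (List.range (T.rowLen 0)).reverse.map fun c => T.cellWt j r c) =
      fun r => ∑ c ∈ range (T.rowLen 0), T.cellWt j r c := by
    funext r
    rw [Function.comp_apply, List.map_reverse, List.sum_reverse, sum_map_range]
  rw [List.sum_flatten, List.map_take, rowBlocks, List.map_map, hrow, ← List.map_take,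
    List.take_range, sum_map_range, idealSum, sum_comm]
  rfl

lemma sum_take_getD_rowBlocks (i m : ℕ) :
    (((T.rowBlocks j).getD i []).take m).sum =
      if i < 2 * n then ∑ c ∈ Ico (T.rowLen 0 - m) (T.rowLen 0), T.cellWt j i c else 0 := by
  split_ifs with hi
  · have : (T.rowBlocks j).getD i [] =
        (List.range (T.rowLen 0)).reverse.map fun c => T.cellWt j i c := by
      simp [rowBlocks, List.getD_eq_getElem?_getD, hi]
    rw [this, sum_take_map_reverse_range]
  · rw [List.getD_eq_default _ _ (by simp [rowBlocks]; omega)]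
    simp

theorem forall_sum_take_word_iff_colsFrom (hT : RowRestriction T) (hj : j < n) :
    (∀ k, 0 ≤ ((T.word.map (wtDiff j)).take k).sum) ↔ ∀ c, 0 ≤ T.idealSum j (colsFrom n c) := by
  have := forall_nonneg_add_sum_take_flatten 0 (T.colBlocks j)
  simp only [zero_add, sum_flatten_take_colBlocks, sum_take_getD_colBlocks] at this
  rw [forall_sum_take_word_iff_colBlocks, this]
  constructor
  · intro h c
    rcases le_or_gt c (T.rowLen 0) with hc | hc
    · simpa [Nat.sub_sub_self hc, colSum_zero] using h (T.rowLen 0 - c) 0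
    · rw [← sum_Ico_colSum_eq_idealSum_colsFrom, Ico_eq_empty_of_le hc.le, sum_empty]
  · intro h i m
    split_ifs with hi
    · set c := T.rowLen 0 - 1 - i
      have hsplit : T.idealSum j (colsFrom n c) =
          T.colSum j c (2 * n) + T.idealSum j (colsFrom n (c + 1)) := by
        rw [← sum_Ico_colSum_eq_idealSum_colsFrom, ← sum_Ico_colSum_eq_idealSum_colsFrom,
          sum_eq_sum_Ico_succ_bot (by omega)]
      rw [show T.rowLen 0 - i = c + 1 by omega]
      have := hT.min_zero_le_colSum hj c (min m (2 * n))
      have := h c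
      have := h (c + 1)
      rcases min_cases 0 (T.colSum j c (2 * n)) with ⟨h', _⟩ | ⟨h', _⟩ <;> linarith
    · simpa using h (T.rowLen 0 - i)

theorem forall_sum_take_wordFE_iff_rowsUpTo :
    (∀ k, 0 ≤ ((T.wordFE.map (wtDiff j)).take k).sum) ↔ ∀ r c, 0 ≤ T.idealSum j (rowsUpTo r c) := by
  have := forall_nonneg_add_sum_take_flatten 0 (T.rowBlocks j)
  simp only [zero_add, sum_flatten_take_rowBlocks, sum_take_getD_rowBlocks] at this
  rw [forall_sum_take_wordFE_iff_rowBlocks, this]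
  have hempty : ∀ {r}, 2 * n ≤ r → ∀ c, ∑ c' ∈ Ico c (T.rowLen 0), T.cellWt j r c' = 0 :=
    fun hr _ => sum_eq_zero fun _ _ =>
      cellWt_of_rowLen_le (by rw [T.rows_bounded _ hr]; exact Nat.zero_le _)
  constructor
  · intro h r c
    rw [idealSum_rowsUpTo]
    rcases lt_or_ge r (2 * n) with hr | hr
    · rcases le_or_gt c (T.rowLen 0) with hc | hc
      · simpa [Nat.sub_sub_self hc, hr, min_eq_left hr.le] using h r (T.rowLen 0 - c)
      · rw [Ico_eq_empty_of_le hc.le, sum_empty]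
        simpa [hr, min_eq_left hr.le] using h r 0
    · have hsat : T.idealSum j (fun _ => r) = T.idealSum j (fun _ => 2 * n) :=
        sum_congr rfl fun c' _ => colSum_eq_of_two_mul_le hr
      rw [hempty hr, add_zero, hsat]
      simpa using h (2 * n) 0
  · intro h i m
    split_ifs with hi
    · rw [min_eq_left hi.le, ← idealSum_rowsUpTo]
      exact h i _
    · rw [add_zero]
      have := h (2 * n) 0
      rwa [idealSum_rowsUpTo, hempty le_rfl, add_zero, ← min_eq_right (not_lt.mp hi)] at this

end SSYT

theorem dominant_word_iff_dominant_wordFE_general (n : ℕ) (T : SSYT n)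
    (hT : RowRestriction T) :
    Dominant T.word ↔ Dominant T.wordFE := by
  rw [dominant_iff_forall_sum_take_nonneg, dominant_iff_forall_sum_take_nonneg]
  refine forall_congr' fun j => ?_
  rcases lt_or_ge j n with hj | hj
  · rw [T.forall_sum_take_word_iff_colsFrom j hT hj, T.forall_sum_take_wordFE_iff_rowsUpTo]
    exact ⟨hT.idealSum_rowsUpTo_nonneg hj, hT.idealSum_colsFrom_nonneg hj⟩
  · simp [funext (wtDiff_eq_zero_of_le hj)]

/-- Lemma `nondependenceofdominance`: for a tableau satisfying the
row-entry restriction and the cancellation property, the word `w(T)` is dominant iff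
the far-eastern word `w'(T)` is dominant. -/
theorem dominant_word_iff_dominant_wordFE (n : ℕ) (T : SSYT n)
    (hT : RowRestriction T) (hc : Cancel T.word) :
    Dominant T.word ↔ Dominant T.wordFE :=
  dominant_word_iff_dominant_wordFE_general n T hT
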